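/- Let α, β, μ ∈ ℝ. Let π₁ be the skew-symmetric matrix-valued map on ℝ³ with entries π₁_{SI} = 0, π₁_{SR} = −β·S·I + μ·I, π₁_{IR} = β·S·I − (α+μ)·I, and π₂ the skew-symmetric matrix-valued map with entries π₂_{SI} = −β·S·I + μ·I, π₂_{SR} = β·S·I − μ·I, π₂_{IR} = −β·S·I + μ·I. Then the sum π = π₁ + π₂, with entries π_{SI} = −β·S·I + μ·I, π_{SR} = 0, π_{IR} = −α·I, satisfies the Jacobi identity: for all x ∈ ℝ³ and all indices i,j,k, ∑_l (π_{l i}(x)·∂_l π_{j k}(x) + π_{l j}(x)·∂_l π_{k i}(x) + π_{l k}(x)·∂_l π_{i j}(x)) = 0. Hence the two Poisson structures of the endemic SIRS model are compatible. -/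

import Mathlib

/-- A pointwise skew-symmetric matrix-valued map `P : ℝⁿ → Matrix(n,n,ℝ)` satisfies the
Jacobi identity if for all `x` and indices `i j k`,
`∑ l, (P_{l i}(x)·∂_l P_{j k}(x) + P_{l j}(x)·∂_l P_{k i}(x) + P_{l k}(x)·∂_l P_{i j}(x)) = 0`. -/
def JacobiIdentity {n : Type*} [Fintype n] [DecidableEq n]
    (P : (n → ℝ) → Matrix n n ℝ) : Prop :=
  ∀ x : n → ℝ, ∀ i j k : n,
    ∑ l : n,
      (P x l i * fderiv ℝ (fun y => P y j k) x (Pi.single l 1) +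
        P x l j * fderiv ℝ (fun y => P y k i) x (Pi.single l 1) +
        P x l k * fderiv ℝ (fun y => P y i j) x (Pi.single l 1)) = 0

/-- The first Poisson structure of the endemic SIRS model, on coordinates
`(S,I,R) = (x 0, x 1, x 2)`: `π₁_{SI} = 0`, `π₁_{SR} = −β·S·I + μ·I`,
`π₁_{IR} = β·S·I − (α+μ)·I`. -/
noncomputable def sirsPoisson1 (α β μ : ℝ) (x : Fin 3 → ℝ) : Matrix (Fin 3) (Fin 3) ℝ :=
  Matrix.of
    ![![0, 0, -β * x 0 * x 1 + μ * x 1],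
      ![0, 0, β * x 0 * x 1 - (α + μ) * x 1],
      ![-(-β * x 0 * x 1 + μ * x 1), -(β * x 0 * x 1 - (α + μ) * x 1), 0]]

/-- The second Poisson structure of the endemic SIRS model:
`π₂_{SI} = −β·S·I + μ·I`, `π₂_{SR} = β·S·I − μ·I`, `π₂_{IR} = −β·S·I + μ·I`. -/
noncomputable def sirsPoisson2 (β μ : ℝ) (x : Fin 3 → ℝ) : Matrix (Fin 3) (Fin 3) ℝ :=
  Matrix.of
    ![![0, -β * x 0 * x 1 + μ * x 1, β * x 0 * x 1 - μ * x 1],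
      ![-(-β * x 0 * x 1 + μ * x 1), 0, -β * x 0 * x 1 + μ * x 1],
      ![-(β * x 0 * x 1 - μ * x 1), -(-β * x 0 * x 1 + μ * x 1), 0]]

/-! For a pointwise skew-symmetric `P`, the Jacobiator `J(i,j,k)` is invariant under cyclic
rotation by its definition, and changes sign under a transposition because `∂ₗ P_{ba} = -∂ₗ P_{ab}`.
So it is totally antisymmetric, and on `ℝ³` the Jacobi identity is the single equation
`J(S,I,R) = 0`. For `π = π₁ + π₂` we have `π_{SR} = 0` and `π_{IR} = -α I`, so only `l = I`
contributes: `J(S,I,R) = π_{IS}·(-α) + π_{IR}·(μ - β S) = α(μ - βS)I - α I(μ - βS) = 0`. -/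

open scoped Matrix

section Jacobiator

variable {n : Type*} [Fintype n] [DecidableEq n] (P : (n → ℝ) → Matrix n n ℝ)

noncomputable def jacobiator (x : n → ℝ) (i j k : n) : ℝ :=
  ∑ l : n,
    (P x l i * fderiv ℝ (fun y => P y j k) x (Pi.single l 1) +
      P x l j * fderiv ℝ (fun y => P y k i) x (Pi.single l 1) +
      P x l k * fderiv ℝ (fun y => P y i j) x (Pi.single l 1))

theorem jacobiator_rotate (x : n → ℝ) (i j k : n) :
    jacobiator P x j k i = jacobiator P x i j k := by
  unfold jacobiator
  congr 1 with l
  ring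

theorem jacobiator_swap (hP : ∀ x, (P x)ᵀ = -P x) (x : n → ℝ) (i j k : n) :
    jacobiator P x j i k = -jacobiator P x i j k := by
  have skew_fun : ∀ a b, (fun y => P y b a) = fun y => -P y a b := fun a b =>
    funext fun y => by simpa using congrFun (congrFun (hP y) a) b
  unfold jacobiator
  rw [← Finset.sum_neg_distrib]
  congr 1 with l
  simp only [skew_fun k i, skew_fun j k, skew_fun i j, fderiv_fun_neg, neg_apply]
  ring

theorem jacobiator_self_left (hP : ∀ x, (P x)ᵀ = -P x) (x : n → ℝ) (i k : n) :
    jacobiator P x i i k = 0 := by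
  linarith [jacobiator_swap P hP x i i k]

end Jacobiator

theorem jacobiIdentity_fin_three {P : (Fin 3 → ℝ) → Matrix (Fin 3) (Fin 3) ℝ}
    (hP : ∀ x, (P x)ᵀ = -P x) (h : ∀ x, jacobiator P x 0 1 2 = 0) : JacobiIdentity P := by
  intro x i j k
  change jacobiator P x i j k = 0
  have h012 := h x
  have h102 : jacobiator P x 1 0 2 = 0 := by rw [jacobiator_swap P hP, h012, neg_zero]
  have self_left := jacobiator_self_left P hP x
  have self_mid : ∀ a b, jacobiator P x a b a = 0 := fun a b => by
    rw [jacobiator_rotate, self_left]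
  have self_right : ∀ a b, jacobiator P x a b b = 0 := fun a b => by
    rw [← jacobiator_rotate, self_left]
  fin_cases i <;> fin_cases j <;> fin_cases k <;>
    simp only [Fin.zero_eta, Fin.mk_one, Fin.reduceFinMk, self_left, self_mid, self_right] <;>
    first | assumption | rwa [jacobiator_rotate] | rwa [← jacobiator_rotate]

theorem fderiv_mul_apply_mul_apply_add {n : Type*} [Fintype n] (a b : ℝ) (i j : n)
    (x v : n → ℝ) :
    fderiv ℝ (fun y : n → ℝ => a * y i * y j + b * y j) x v =
      a * (v i * x j + x i * v j) + b * v j := by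
  have hi := hasFDerivAt_apply (𝕜 := ℝ) i x
  have hj := hasFDerivAt_apply (𝕜 := ℝ) j x
  have h : HasFDerivAt (fun y : n → ℝ => a * y i * y j + b * y j) _ x :=
    ((hi.const_mul a).mul hj).add (hj.const_mul b)
  rw [h.fderiv]
  simp only [add_apply, smul_apply, ContinuousLinearMap.proj_apply, smul_eq_mul]
  ring

section SIRS

variable (α β μ : ℝ)

noncomputable def sirsPoisson (x : Fin 3 → ℝ) : Matrix (Fin 3) (Fin 3) ℝ :=
  sirsPoisson1 α β μ x + sirsPoisson2 β μ x

theorem sirsPoisson1_transpose (x : Fin 3 → ℝ) :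
    (sirsPoisson1 α β μ x)ᵀ = -sirsPoisson1 α β μ x := by
  ext i j
  fin_cases i <;> fin_cases j <;> simp [sirsPoisson1]

theorem sirsPoisson2_transpose (x : Fin 3 → ℝ) :
    (sirsPoisson2 β μ x)ᵀ = -sirsPoisson2 β μ x := by
  ext i j
  fin_cases i <;> fin_cases j <;> simp [sirsPoisson2]

theorem sirsPoisson_transpose (x : Fin 3 → ℝ) : (sirsPoisson α β μ x)ᵀ = -sirsPoisson α β μ x := by
  rw [sirsPoisson, Matrix.transpose_add, sirsPoisson1_transpose, sirsPoisson2_transpose, neg_add]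

theorem sirsPoisson_apply_zero_one (x : Fin 3 → ℝ) :
    sirsPoisson α β μ x 0 1 = -β * x 0 * x 1 + μ * x 1 := by
  simp [sirsPoisson, sirsPoisson1, sirsPoisson2]

theorem sirsPoisson_apply_zero_two (x : Fin 3 → ℝ) : sirsPoisson α β μ x 0 2 = 0 := by
  simp [sirsPoisson, sirsPoisson1, sirsPoisson2]

theorem sirsPoisson_apply_one_two (x : Fin 3 → ℝ) : sirsPoisson α β μ x 1 2 = -α * x 1 := by
  show β * x 0 * x 1 - (α + μ) * x 1 + (-β * x 0 * x 1 + μ * x 1) = -α * x 1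
  ring

theorem sirsPoisson_apply_swap (x : Fin 3 → ℝ) (i j : Fin 3) :
    sirsPoisson α β μ x j i = -sirsPoisson α β μ x i j := by
  simpa using congrFun (congrFun (sirsPoisson_transpose α β μ x) i) j

theorem jacobiator_sirsPoisson (x : Fin 3 → ℝ) : jacobiator (sirsPoisson α β μ) x 0 1 2 = 0 := by
  have d01 : (fun y => sirsPoisson α β μ y 0 1) = fun y => -β * y 0 * y 1 + μ * y 1 :=
    funext (sirsPoisson_apply_zero_one α β μ)
  have d12 : (fun y => sirsPoisson α β μ y 1 2) = fun y => 0 * y 0 * y 1 + -α * y 1 :=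
    funext fun y => by rw [sirsPoisson_apply_one_two]; ring
  have d20 : (fun y => sirsPoisson α β μ y 2 0) = fun _ => 0 :=
    funext fun y => by rw [sirsPoisson_apply_swap, sirsPoisson_apply_zero_two, neg_zero]
  calc jacobiator (sirsPoisson α β μ) x 0 1 2
      = sirsPoisson α β μ x 1 0 * -α + sirsPoisson α β μ x 0 2 * (-β * x 1) +
          sirsPoisson α β μ x 1 2 * (-β * x 0 + μ) := by
        simp only [jacobiator, d01, d12, d20, fderiv_mul_apply_mul_apply_add, fderiv_const_apply,
          Fin.sum_univ_three]
        simp only [Pi.single_eq_same, ne_eq, one_ne_zero, zero_ne_one, Fin.reduceEq,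
          not_false_eq_true, Pi.single_eq_of_ne, zero_apply]
        ring
    _ = 0 := by
        rw [sirsPoisson_apply_swap, sirsPoisson_apply_zero_one, sirsPoisson_apply_zero_two,
          sirsPoisson_apply_one_two]
        ring

end SIRS

/-- The sum of the two Poisson structures of the endemic SIRS model, with entries
`π_{SI} = −β·S·I + μ·I`, `π_{SR} = 0`, `π_{IR} = −α·I`, satisfies the Jacobi identity,
hence the two Poisson structures are compatible. -/
theorem endemicSIRS_poisson_structures_compatible (α β μ : ℝ) :
    (∀ x : Fin 3 → ℝ,
      (sirsPoisson1 α β μ x + sirsPoisson2 β μ x) 0 1 = -β * x 0 * x 1 + μ * x 1 ∧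
      (sirsPoisson1 α β μ x + sirsPoisson2 β μ x) 0 2 = 0 ∧
      (sirsPoisson1 α β μ x + sirsPoisson2 β μ x) 1 2 = -α * x 1) ∧
    JacobiIdentity (fun x => sirsPoisson1 α β μ x + sirsPoisson2 β μ x) :=
  ⟨fun x => ⟨sirsPoisson_apply_zero_one α β μ x, sirsPoisson_apply_zero_two α β μ x,
      sirsPoisson_apply_one_two α β μ x⟩,
    jacobiIdentity_fin_three (sirsPoisson_transpose α β μ) (jacobiator_sirsPoisson α β μ)⟩
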